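/- Let k > 0 and a, b ∈ ℝ with (|a|^{2/3} + |b|^{2/3})^{3/2} < k. Set Θ := (|a|^{2/3} + |b|^{2/3})^{3/2}. Then for every n ∈ ℕ, all continuous inputs u, w : [0,∞) → ℝ, every ξ = (ξ_1,…,ξ_n) ∈ ℝ^n, and every solution (x_1,…,x_n) of the linear string x_i'(t) = a·x_{i−1}(t) − k·x_i(t) + b·x_{i+1}(t) (with x_0 := u, x_{n+1} := w) and x_i(0) = ξ_i, the estimate ‖x_i‖_{[0,t],2} ≤ (|a|^{2/3}(|a|^{2/3}+|b|^{2/3})^{1/2}/(k − Θ))·‖u‖_{[0,t],2} + (|b|^{2/3}(|a|^{2/3}+|b|^{2/3})^{1/2}/(k − Θ))·‖w‖_{[0,t],2} + (k^{1/2}/(k − Θ))·max_{j=1,…,n} |ξ_j| holds for all t ≥ 0 and all i = 1,…,n. -/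

import Mathlib

/-!
Multiplying the equation of node `i` by `xᵢ` and integrating over `[0, t]` gives the energy
inequality `k ‖xᵢ‖² ≤ ξᵢ²/2 + (|a| ‖xᵢ₋₁‖ + |b| ‖xᵢ₊₁‖) ‖xᵢ‖` (Cauchy–Schwarz on the coupling
terms), hence `k ‖xᵢ‖ ≤ |a| ‖xᵢ₋₁‖ + |b| ‖xᵢ₊₁‖ + √k |ξᵢ|`. At a node where `‖xᵢ‖` is maximal
this yields `(k - |a| - |b|) ‖xᵢ‖ ≤ |a| ‖u‖ + |b| ‖w‖ + √k max |ξⱼ|`, and the gains of the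
statement dominate these, since `|a| ≤ |a|^{2/3} (|a|^{2/3} + |b|^{2/3})^{1/2}` and
`|a| + |b| ≤ Θ`.
-/

/-- The `L²` norm of a real-valued signal on the interval `[0, t]`. -/
noncomputable def l2Norm (y : ℝ → ℝ) (t : ℝ) : ℝ :=
  Real.sqrt (∫ s in (0:ℝ)..t, (y s) ^ 2)

open Set intervalIntegral
open MeasureTheory (volume)

theorem mul_le_add_sqrt_mul_of_mul_sq_le {k m B N : ℝ} (hk : 0 < k) (hm : 0 ≤ m) (hB : 0 ≤ B)
    (hN : 0 ≤ N) (h : k * N ^ 2 ≤ m ^ 2 + B * N) : k * N ≤ B + √k * m := by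
  have hsk : √k ^ 2 = k := Real.sq_sqrt hk.le
  rcases le_or_gt (√k * N) m with hNm | hNm
  · nlinarith [Real.sqrt_nonneg k]
  · by_contra! hlt
    have hNpos : 0 < N := by nlinarith [Real.sqrt_nonneg k]
    nlinarith [mul_lt_mul_of_pos_right hlt hNpos, mul_le_mul_of_nonneg_left hNm.le hm]

theorem sub_mul_le_of_forall_mul_le {N : ℕ → ℝ} {n : ℕ} {k p q r : ℝ} (hp : 0 ≤ p) (hq : 0 ≤ q)
    (hpq : p + q ≤ k) (hN : ∀ j, 0 ≤ N j)
    (h : ∀ j ∈ Finset.Icc 1 n, k * N j ≤ p * N (j - 1) + q * N (j + 1) + r) :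
    ∀ i ∈ Finset.Icc 1 n, (k - p - q) * N i ≤ p * N 0 + q * N (n + 1) + r := by
  intro i hi
  obtain ⟨m, hm, hmax⟩ := Finset.exists_max_image (Finset.Icc 1 n) N ⟨i, hi⟩
  obtain ⟨hm1, hmn⟩ := Finset.mem_Icc.1 hm
  have hleft : N (m - 1) ≤ N 0 + N m := by
    rcases hm1.eq_or_lt with rfl | hlt
    · simpa using hN 1
    · linarith [hN 0, hmax (m - 1) (Finset.mem_Icc.2 ⟨by omega, by omega⟩)]
  have hright : N (m + 1) ≤ N (n + 1) + N m := by
    rcases hmn.eq_or_lt with rfl | hlt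
    · linarith [hN m]
    · linarith [hN (n + 1), hmax (m + 1) (Finset.mem_Icc.2 ⟨by omega, by omega⟩)]
  nlinarith [h m hm, hmax i hi, mul_le_mul_of_nonneg_left hleft hp,
    mul_le_mul_of_nonneg_left hright hq]

theorem le_rpow_two_thirds_mul_sqrt {x y : ℝ} (hx : 0 ≤ x) (hy : 0 ≤ y) :
    x ≤ x ^ ((2:ℝ)/3) * (x ^ ((2:ℝ)/3) + y ^ ((2:ℝ)/3)) ^ ((1:ℝ)/2) := by
  have hx' : 0 ≤ x ^ ((2:ℝ)/3) := Real.rpow_nonneg hx _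
  calc x = x ^ ((2:ℝ)/3) * (x ^ ((2:ℝ)/3)) ^ ((1:ℝ)/2) := by
        rw [← Real.rpow_mul hx, ← Real.rpow_add' hx (by norm_num)]; norm_num
    _ ≤ _ := by gcongr; exact le_add_of_nonneg_right (Real.rpow_nonneg hy _)

theorem add_le_rpow_three_halves {x y : ℝ} (hx : 0 ≤ x) (hy : 0 ≤ y) :
    x + y ≤ (x ^ ((2:ℝ)/3) + y ^ ((2:ℝ)/3)) ^ ((3:ℝ)/2) := by
  have hxs := le_rpow_two_thirds_mul_sqrt hx hy
  have hys := le_rpow_two_thirds_mul_sqrt hy hx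
  rw [add_comm (y ^ _)] at hys
  calc x + y
      ≤ (x ^ ((2:ℝ)/3) + y ^ ((2:ℝ)/3)) * (x ^ ((2:ℝ)/3) + y ^ ((2:ℝ)/3)) ^ ((1:ℝ)/2) := by
        linarith
    _ = _ := by rw [← Real.rpow_one_add' (by positivity) (by norm_num)]; norm_num

section Analysis

variable {f g y p q : ℝ → ℝ} {a b k t : ℝ}

theorem l2Norm_nonneg (y : ℝ → ℝ) (t : ℝ) : 0 ≤ l2Norm y t := Real.sqrt_nonneg _

theorem sq_l2Norm (ht : 0 ≤ t) (f : ℝ → ℝ) : l2Norm f t ^ 2 = ∫ s in (0:ℝ)..t, f s ^ 2 :=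
  Real.sq_sqrt (integral_nonneg ht fun _ _ => sq_nonneg _)

theorem abs_integral_mul_le_l2Norm_mul (ht : 0 ≤ t)
    (hf : ContinuousOn f (Icc 0 t)) (hg : ContinuousOn g (Icc 0 t)) :
    |∫ s in (0:ℝ)..t, f s * g s| ≤ l2Norm f t * l2Norm g t := by
  have hff : IntervalIntegrable (fun s => f s ^ 2) volume 0 t :=
    (hf.pow 2).intervalIntegrable_of_Icc ht
  have hfg : IntervalIntegrable (fun s => f s * g s) volume 0 t :=
    (hf.mul hg).intervalIntegrable_of_Icc ht
  have hgg : IntervalIntegrable (fun s => g s ^ 2) volume 0 t :=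
    (hg.pow 2).intervalIntegrable_of_Icc ht
  -- `∫ (λ f + g)² ≥ 0` for every `λ`, so the discriminant of this quadratic in `λ` is `≤ 0`.
  have hquad : ∀ l : ℝ, 0 ≤ (∫ s in (0:ℝ)..t, f s ^ 2) * (l * l)
      + 2 * (∫ s in (0:ℝ)..t, f s * g s) * l + ∫ s in (0:ℝ)..t, g s ^ 2 := fun l => by
    have hexp : ∫ s in (0:ℝ)..t, (l * f s + g s) ^ 2 = ∫ s in (0:ℝ)..t,
        ((l * l) * f s ^ 2 + (2 * l) * (f s * g s) + g s ^ 2) :=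
      integral_congr fun s _ => by ring
    rw [integral_add ((hff.const_mul _).add (hfg.const_mul _)) hgg,
      integral_add (hff.const_mul _) (hfg.const_mul _), integral_const_mul,
      integral_const_mul] at hexp
    have hsq : 0 ≤ ∫ s in (0:ℝ)..t, (l * f s + g s) ^ 2 :=
      integral_nonneg ht fun s _ => sq_nonneg _
    linarith
  have hdisc := discrim_le_zero hquad
  rw [discrim, ← sq_l2Norm ht, ← sq_l2Norm ht] at hdisc
  exact abs_le_of_sq_le_sq (by nlinarith) (mul_nonneg (l2Norm_nonneg f t) (l2Norm_nonneg g t))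

theorem mul_sq_l2Norm_le_of_hasDerivAt (ht : 0 ≤ t)
    (hp : ContinuousOn p (Icc 0 t)) (hq : ContinuousOn q (Icc 0 t))
    (hy : ∀ s ∈ Icc 0 t, HasDerivAt y (a * p s - k * y s + b * q s) s) :
    k * l2Norm y t ^ 2 ≤
      y 0 ^ 2 / 2 + (|a| * l2Norm p t + |b| * l2Norm q t) * l2Norm y t := by
  have hyc : ContinuousOn y (Icc 0 t) := fun s hs => (hy s hs).continuousAt.continuousWithinAt
  have hpy : IntervalIntegrable (fun s => p s * y s) volume 0 t :=
    (hp.mul hyc).intervalIntegrable_of_Icc ht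
  have hyy : IntervalIntegrable (fun s => y s ^ 2) volume 0 t :=
    (hyc.pow 2).intervalIntegrable_of_Icc ht
  have hqy : IntervalIntegrable (fun s => q s * y s) volume 0 t :=
    (hq.mul hyc).intervalIntegrable_of_Icc ht
  have hderiv : ∀ s ∈ uIcc 0 t, HasDerivAt (fun s => y s ^ 2)
      ((2 * a) * (p s * y s) - (2 * k) * y s ^ 2 + (2 * b) * (q s * y s)) s := fun s hs => by
    refine ((hy s (uIcc_of_le ht ▸ hs)).pow 2).congr_deriv ?_
    norm_num; ring
  have henergy := integral_eq_sub_of_hasDerivAt hderiv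
    (((hpy.const_mul _).sub (hyy.const_mul _)).add (hqy.const_mul _))
  rw [integral_add ((hpy.const_mul _).sub (hyy.const_mul _)) (hqy.const_mul _),
    integral_sub (hpy.const_mul _) (hyy.const_mul _), integral_const_mul,
    integral_const_mul, integral_const_mul, ← sq_l2Norm ht] at henergy
  have hpy' : a * ∫ s in (0:ℝ)..t, p s * y s ≤ |a| * (l2Norm p t * l2Norm y t) :=
    (le_abs_self _).trans <| (abs_mul _ _).trans_le <|
      mul_le_mul_of_nonneg_left (abs_integral_mul_le_l2Norm_mul ht hp hyc) (abs_nonneg a)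
  have hqy' : b * ∫ s in (0:ℝ)..t, q s * y s ≤ |b| * (l2Norm q t * l2Norm y t) :=
    (le_abs_self _).trans <| (abs_mul _ _).trans_le <|
      mul_le_mul_of_nonneg_left (abs_integral_mul_le_l2Norm_mul ht hq hyc) (abs_nonneg b)
  nlinarith [sq_nonneg (y t)]

theorem mul_l2Norm_le_of_hasDerivAt (hk : 0 < k) (ht : 0 ≤ t)
    (hp : ContinuousOn p (Icc 0 t)) (hq : ContinuousOn q (Icc 0 t))
    (hy : ∀ s ∈ Icc 0 t, HasDerivAt y (a * p s - k * y s + b * q s) s) :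
    k * l2Norm y t ≤ |a| * l2Norm p t + |b| * l2Norm q t + √k * |y 0| := by
  refine mul_le_add_sqrt_mul_of_mul_sq_le hk (abs_nonneg _)
    (add_nonneg (mul_nonneg (abs_nonneg a) (l2Norm_nonneg p t))
      (mul_nonneg (abs_nonneg b) (l2Norm_nonneg q t))) (l2Norm_nonneg y t) ?_
  have := mul_sq_l2Norm_le_of_hasDerivAt ht hp hq hy
  nlinarith [sq_abs (y 0), sq_nonneg (y 0)]

end Analysis

theorem linear_string_bidirectional (k a b : ℝ) (hk : 0 < k)
    (Θ : ℝ) (hΘdef : Θ = (|a| ^ ((2:ℝ)/3) + |b| ^ ((2:ℝ)/3)) ^ ((3:ℝ)/2)) (hΘ : Θ < k) :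
    ∀ (n : ℕ) (hn : 1 ≤ n), ∀ u w : ℝ → ℝ,
      ContinuousOn u (Set.Ici 0) → ContinuousOn w (Set.Ici 0) →
      ∀ ξ : ℕ → ℝ, ∀ x : ℕ → ℝ → ℝ,
        (∀ t, x 0 t = u t) → (∀ t, x (n + 1) t = w t) →
        (∀ i, 1 ≤ i → i ≤ n → x i 0 = ξ i ∧
          ∀ t ≥ (0:ℝ), HasDerivAt (x i)
            (a * x (i - 1) t - k * x i t + b * x (i + 1) t) t) →
        ∀ i, 1 ≤ i → i ≤ n → ∀ t ≥ (0:ℝ),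
          l2Norm (x i) t ≤
            (|a| ^ ((2:ℝ)/3) * (|a| ^ ((2:ℝ)/3) + |b| ^ ((2:ℝ)/3)) ^ ((1:ℝ)/2) / (k - Θ)) *
              l2Norm u t +
            (|b| ^ ((2:ℝ)/3) * (|a| ^ ((2:ℝ)/3) + |b| ^ ((2:ℝ)/3)) ^ ((1:ℝ)/2) / (k - Θ)) *
              l2Norm w t +
            (Real.sqrt k / (k - Θ)) *
              ((Finset.Icc 1 n).sup' (Finset.nonempty_Icc.mpr hn) fun j => |ξ j|) := by
  intro n hn u w hu hw ξ x hx0 hxn hsol i hi hin t ht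
  set M := (Finset.Icc 1 n).sup' (Finset.nonempty_Icc.mpr hn) fun j => |ξ j|
  have hcont : ∀ j ≤ n + 1, ContinuousOn (x j) (Icc 0 t) := by
    intro j hj
    rcases Nat.eq_zero_or_pos j with rfl | hj0
    · exact (hu.mono Icc_subset_Ici_self).congr fun s _ => hx0 s
    rcases hj.eq_or_lt with rfl | hjn
    · exact (hw.mono Icc_subset_Ici_self).congr fun s _ => hxn s
    exact fun s hs => ((hsol j hj0 (by omega)).2 s hs.1).continuousAt.continuousWithinAt
  have hnode : ∀ j ∈ Finset.Icc 1 n, k * l2Norm (x j) t ≤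
      |a| * l2Norm (x (j - 1)) t + |b| * l2Norm (x (j + 1)) t + √k * M := by
    intro j hj
    obtain ⟨hj1, hjn⟩ := Finset.mem_Icc.1 hj
    obtain ⟨hξ, hderiv⟩ := hsol j hj1 hjn
    have hest := mul_l2Norm_le_of_hasDerivAt hk ht (hcont (j - 1) (by omega))
      (hcont (j + 1) (by omega)) fun s hs => hderiv s hs.1
    rw [hξ] at hest
    linarith [mul_le_mul_of_nonneg_left (Finset.le_sup' (fun j => |ξ j|) hj) (Real.sqrt_nonneg k)]
  have hab : |a| + |b| ≤ Θ := hΘdef ▸ add_le_rpow_three_halves (abs_nonneg a) (abs_nonneg b)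
  have hstring := sub_mul_le_of_forall_mul_le (abs_nonneg a) (abs_nonneg b) (by linarith)
    (fun j => l2Norm_nonneg _ t) hnode i (Finset.mem_Icc.2 ⟨hi, hin⟩)
  rw [funext hx0, funext hxn] at hstring
  have hga := le_rpow_two_thirds_mul_sqrt (abs_nonneg a) (abs_nonneg b)
  have hgb := le_rpow_two_thirds_mul_sqrt (abs_nonneg b) (abs_nonneg a)
  rw [add_comm (|b| ^ _)] at hgb
  rw [div_mul_eq_mul_div, div_mul_eq_mul_div, div_mul_eq_mul_div, ← add_div, ← add_div,
    le_div_iff₀ (by linarith)]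
  nlinarith [l2Norm_nonneg (x i) t, l2Norm_nonneg u t, l2Norm_nonneg w t,
    mul_le_mul_of_nonneg_right hga (l2Norm_nonneg u t),
    mul_le_mul_of_nonneg_right hgb (l2Norm_nonneg w t)]
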